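/- arXiv:1910.11989 — 8 statements merged into one kernel-verified Lean document; each statement's English description precedes it below -/
import Mathlib

section
/- Let p be a prime, n ≥ 1, and b ∈ F_{p^n} with Tr_{F_{p^n}/F_p}(b) ≠ 0. The map f_b(x) = x + (x^p - x + b)^{-1} fails to be a permutation of F_{p^n} if and only if the polynomial F(X,Y) = (X^p - X + b)^2 + (Y^p - Y)(X^p - X + b) + 1 - Y^{p-1} has a zero (x,y) ∈ F_{p^n}^2 with y ≠ 0. -/
/-!
The map `f x = x + (x ^ p - x + b)⁻¹` is a self-map of a finite set, so it fails to be bijective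
iff `f (x + y) = f x` for some `x` and `y ≠ 0`. Put `u = x ^ p - x + b`, which never vanishes because
`x ^ p - x` has trace zero. Additivity of `z ↦ z ^ p - z` turns `f (x + y) = f x` into
`y = u⁻¹ - (u + y ^ p - y)⁻¹`, i.e. `y u (u + y ^ p - y) = y ^ p - y`, and this is `y F(x, y) = 0`.
-/

theorem FiniteField.trace_pow_card_eq_trace (K L : Type*) [Field K] [Fintype K] [Field L]
    [Finite L] [Algebra K L] (x : L) :
    Algebra.trace K L (x ^ Fintype.card K) = Algebra.trace K L x :=
  Algebra.trace_eq_of_algEquiv (FiniteField.frobeniusAlgEquivOfAlgebraic K L) x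

theorem pow_sub_self_add_ne_zero_of_trace_ne_zero (p : ℕ) [Fact p.Prime] {L : Type*} [Field L]
    [Finite L] [Algebra (ZMod p) L] {b : L} (hb : Algebra.trace (ZMod p) L b ≠ 0) (x : L) :
    x ^ p - x + b ≠ 0 := by
  intro h
  have htrace := FiniteField.trace_pow_card_eq_trace (ZMod p) L x
  rw [ZMod.card] at htrace
  apply hb
  rw [show b = x - x ^ p by linear_combination h, map_sub, htrace, sub_self]

theorem Function.not_bijective_iff_exists_add_eq {α : Type*} [Finite α] [AddGroup α]
    {f : α → α} : ¬ Function.Bijective f ↔ ∃ x y, y ≠ 0 ∧ f (x + y) = f x := by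
  rw [← Finite.injective_iff_bijective, Function.Injective]
  push Not
  constructor
  · rintro ⟨x₁, x₂, hf, hne⟩
    exact ⟨x₁, -x₁ + x₂, by simpa [neg_add_eq_zero] using hne, by simpa using hf.symm⟩
  · rintro ⟨x, y, hy, hf⟩
    exact ⟨x + y, x, hf, by simpa using hy⟩

theorem mul_sq_add_pow_sub_mul_add_one_sub_pow_pred {R : Type*} [CommRing R] {p : ℕ} (hp : 1 ≤ p)
    (u y : R) :
    y * (u ^ 2 + (y ^ p - y) * u + 1 - y ^ (p - 1)) = y * u * (u + (y ^ p - y)) - (y ^ p - y) := by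
  have hy : y * y ^ (p - 1) = y ^ p := by rw [← pow_succ', Nat.sub_add_cancel hp]
  linear_combination -hy

theorem add_inv_eq_inv_iff {K : Type*} [Field K] {u v y : K} (hu : u ≠ 0) (hv : v ≠ 0) :
    y + v⁻¹ = u⁻¹ ↔ y * u * v = v - u := by
  rw [← eq_sub_iff_add_eq, inv_sub_inv hu hv, eq_div_iff (mul_ne_zero hu hv), mul_assoc]

section CharP

variable {K : Type*} [Field K] (p : ℕ) [Fact p.Prime] [CharP K p]

theorem add_pow_char_sub_add_add (x y b : K) :
    (x + y) ^ p - (x + y) + b = (x ^ p - x + b) + (y ^ p - y) := by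
  rw [add_pow_char]
  ring

theorem add_add_inv_pow_sub_add_eq_iff {b : K} (hb : ∀ x : K, x ^ p - x + b ≠ 0) {x y : K}
    (hy : y ≠ 0) :
    x + y + ((x + y) ^ p - (x + y) + b)⁻¹ = x + (x ^ p - x + b)⁻¹ ↔
      (x ^ p - x + b) ^ 2 + (y ^ p - y) * (x ^ p - x + b) + 1 - y ^ (p - 1) = 0 := by
  have hv := hb (x + y)
  rw [add_pow_char_sub_add_add] at hv ⊢
  rw [add_assoc, add_right_inj, add_inv_eq_inv_iff (hb x) hv, add_sub_cancel_left,
    ← sub_eq_zero, ← mul_sq_add_pow_sub_mul_add_one_sub_pow_pred (Fact.out : p.Prime).one_le,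
    mul_eq_zero, or_iff_right hy]

end CharP

theorem stmt_2_general (p : ℕ) [Fact p.Prime] (n : ℕ)
    (b : GaloisField p n)
    (hb : Algebra.trace (ZMod p) (GaloisField p n) b ≠ 0) :
    ¬ Function.Bijective (fun x : GaloisField p n => x + (x ^ p - x + b)⁻¹) ↔
      ∃ x y : GaloisField p n, y ≠ 0 ∧
        (x ^ p - x + b) ^ 2 + (y ^ p - y) * (x ^ p - x + b) + 1 - y ^ (p - 1) = 0 := by
  rw [Function.not_bijective_iff_exists_add_eq]
  exact exists_congr fun x ↦ exists_congr fun y ↦ and_congr_right fun hy ↦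
    add_add_inv_pow_sub_add_eq_iff p (pow_sub_self_add_ne_zero_of_trace_ne_zero p hb) hy

theorem stmt_2 (p : ℕ) [Fact p.Prime] (n : ℕ) (hn : 1 ≤ n)
    (b : GaloisField p n)
    (hb : Algebra.trace (ZMod p) (GaloisField p n) b ≠ 0) :
    ¬ Function.Bijective (fun x : GaloisField p n => x + (x ^ p - x + b)⁻¹) ↔
      ∃ x y : GaloisField p n, y ≠ 0 ∧
        (x ^ p - x + b) ^ 2 + (y ^ p - y) * (x ^ p - x + b) + 1 - y ^ (p - 1) = 0 :=
  stmt_2_general p n b hb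
end

section
/- Let p > 3 be prime. The polynomial Y^{p+1} - Y^2 + 4 ∈ F_p[Y] is squarefree, i.e., it has no multiple roots in the algebraic closure of F_p. -/
/-! At a common root `a` of `f = Y^(p+1) - Y^2 + 4` and `f' = Y^p - 2Y` we get `a^p = 2a` and then
`a^2 = -4`. Applying Frobenius to `a^2 = -4` gives `(a^p)^2 = -4`, while `a^p = 2a` gives
`(a^p)^2 = 4a^2 = -16`; hence `12 = 0`, impossible in characteristic `p > 3`. -/

open Polynomial

section CharP

variable {R : Type*} [CommRing R] {p : ℕ}

theorem derivative_X_pow_succ_sub_X_sq_add_four [CharP R p] :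
    derivative (X ^ (p + 1) - X ^ 2 + 4 : R[X]) = X ^ p - 2 * X := by
  have hp : ((p + 1 : ℕ) : R[X]) = 1 := by simp
  simp only [derivative_add, derivative_sub, derivative_X_pow, derivative_ofNat, map_natCast, hp]
  norm_num

variable [Fact p.Prime]

theorem twelve_eq_zero_of_pow_char_eq_two_mul [CharP R p] {a : R} (hfrob : a ^ p = 2 * a)
    (hsq : a ^ 2 = -4) : (12 : R) = 0 := by
  have hfour : (-4 : R) ^ p = -4 := by rw [← frobenius_def, map_neg, map_ofNat]
  have hfrob_sq : (a ^ p) ^ 2 = (-4 : R) ^ p := by rw [← pow_mul, mul_comm, pow_mul, hsq]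
  linear_combination 4 * hsq + (a ^ p + 2 * a) * hfrob - hfour - hfrob_sq

theorem le_three_of_twelve_eq_zero [CharP R p] (h : (12 : R) = 0) : p ≤ 3 := by
  have hp := (Fact.out : p.Prime)
  have hdvd : p ∣ 12 := (CharP.cast_eq_zero_iff R p 12).mp (by exact_mod_cast h)
  rcases hp.dvd_mul.mp (show p ∣ 2 ^ 2 * 3 from hdvd) with h2 | h3
  · exact (Nat.le_of_dvd two_pos (hp.dvd_of_dvd_pow h2)).trans (by norm_num)
  · exact Nat.le_of_dvd three_pos h3

theorem separable_X_pow_char_succ_sub_X_sq_add_four {K : Type*} [Field K] [CharP K p]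
    (hp : 3 < p) : (X ^ (p + 1) - X ^ 2 + 4 : K[X]).Separable := by
  rw [Separable, derivative_X_pow_succ_sub_X_sq_add_four,
    isCoprime_iff_aeval_ne_zero_of_isAlgClosed K (AlgebraicClosure K)]
  intro a
  by_contra! ⟨hf, hdf⟩
  simp only [map_add, map_sub, map_pow, map_mul, aeval_X, map_ofNat] at hf hdf
  have hfrob : a ^ p = 2 * a := by linear_combination hdf
  have hsq : a ^ 2 = -4 := by linear_combination hf - a * hfrob
  exact (le_three_of_twelve_eq_zero (twelve_eq_zero_of_pow_char_eq_two_mul hfrob hsq)).not_gt hp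

end CharP

theorem stmt_3 (p : ℕ) [Fact p.Prime] (hp : 3 < p) :
    Squarefree ((X ^ (p + 1) - X ^ 2 + 4 : (ZMod p)[X]).map
      (algebraMap (ZMod p) (AlgebraicClosure (ZMod p)))) :=
  ((separable_X_pow_char_succ_sub_X_sq_add_four hp).map).squarefree
end

section
/- Let p > 3 be prime and let K be the algebraic closure of F_p. There is no rational function A ∈ K(Y) satisfying A^p · ((Y^{p-1} - 1)(Y^2(Y^{p-1} - 1) + 4))^{(p-1)/2} - 2A - 1 = 0. -/
/-!
Write `A = f / g` in lowest terms with `g` monic, and let `p - 1 = 2m` and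
`P = (Y^(p-1) - 1)(Y^2 (Y^(p-1) - 1) + 4)`. Clearing denominators gives
`f^p P^m = g^(2m) (2f + g)`. As `g` is coprime to `f`, `(g^2)^m ∣ P^m`, so `g^2 ∣ P`.
But `P` is separable when `p > 3`, hence squarefree, so `g = 1`; and then the degree of
`f^p P^m` exceeds that of `2f + 1`.
-/

lemma isUnit_of_pow_dvd_mul_pow_of_squarefree {R : Type*} [CommRing R] [IsDomain R]
    [UniqueFactorizationMonoid R] {f g P : R} {k m : ℕ} (hm : m ≠ 0) (hfg : IsCoprime f g)
    (hP : Squarefree P) (h : g ^ (2 * m) ∣ f ^ k * P ^ m) : IsUnit g := by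
  have hdvd : (g * g) ^ m ∣ P ^ m := by
    rw [← sq, ← pow_mul]
    exact (hfg.pow (m := k)).symm.dvd_of_dvd_mul_left h
  exact hP g ((UniqueFactorizationMonoid.pow_dvd_pow_iff_dvd hm).1 hdvd)

namespace Polynomial

variable {K : Type*} [Field K]

lemma pow_succ_mul_ne_two_mul_add_one (f : K[X]) {P : K[X]} (n : ℕ) (hP : P.natDegree ≠ 0) :
    f ^ (n + 1) * P ≠ 2 * f + 1 := by
  intro h
  have hf : f ≠ 0 := by
    rintro rfl
    simp at h
  have hP0 : P ≠ 0 := by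
    rintro rfl
    simp at hP
  have hdeg := congrArg natDegree h
  rw [natDegree_mul (pow_ne_zero _ hf) hP0, natDegree_pow] at hdeg
  have hle : (2 * f + 1).natDegree ≤ f.natDegree :=
    (natDegree_add_le _ _).trans (max_le (natDegree_mul_le.trans (by simp)) (by simp))
  nlinarith [Nat.pos_of_ne_zero hP, hle]

lemma isCoprime_X_pow_sub_one_X_sq_mul_add_four (n : ℕ) (h2 : (2 : K) ≠ 0) :
    IsCoprime (X ^ n - 1 : K[X]) (X ^ 2 * (X ^ n - 1) + 4) := by
  rw [add_comm, IsCoprime.add_mul_right_right_iff]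
  have h4 : IsUnit (4 : K[X]) := by
    have h4 : (4 : K) ≠ 0 := by simpa [show (4 : K) = 2 * 2 by norm_num] using h2
    rw [← map_ofNat (C : K →+* K[X]) 4]
    exact isUnit_C.2 h4.isUnit
  exact isCoprime_one_right.of_isCoprime_of_dvd_right h4.dvd

variable (p : ℕ) [Fact p.Prime] [CharP K p]

/-- At a double root `c` one finds `c ^ (p - 1) = 2` and `c ^ 2 = -4`; applying Frobenius to
`c ^ 2 + 4 = 0` then gives `12 = 0`. -/
lemma separable_X_sq_mul_X_pow_pred_sub_one_add_four [IsAlgClosed K] (hp : 3 < p) :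
    (X ^ 2 * (X ^ (p - 1) - 1) + 4 : K[X]).Separable := by
  have h2 : (2 : K) ≠ 0 :=
    mod_cast CharP.cast_ne_zero_of_ne_of_prime K (q := 2) Nat.prime_two (by omega)
  have h3 : (3 : K) ≠ 0 :=
    mod_cast CharP.cast_ne_zero_of_ne_of_prime K (q := 3) Nat.prime_three (by omega)
  have h4 : (4 : K) ^ p = 4 := by simpa [frobenius_def] using map_natCast (frobenius K p) 4
  obtain ⟨n, rfl⟩ : ∃ n, p = n + 2 := ⟨p - 2, by omega⟩
  have hn : (n : K) + 1 = -1 := by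
    have := CharP.cast_eq_zero K (n + 2)
    push_cast at this
    linear_combination this
  rw [separable_def, isCoprime_iff_aeval_ne_zero_of_isAlgClosed (k := K) K]
  intro c
  by_contra! ⟨hE, hE'⟩
  simp only [coe_aeval_eq_eval, show n + 2 - 1 = n + 1 by omega, derivative_add, derivative_mul,
    derivative_sub, derivative_X_pow, derivative_one, derivative_ofNat, eval_add, eval_mul,
    eval_sub, eval_pow, eval_X, eval_one, eval_ofNat, eval_C, eval_zero, Nat.cast_ofNat] at hE hE'
  push_cast at hE'
  have hc : c ≠ 0 := by
    rintro rfl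
    simp only [ne_eq, OfNat.ofNat_ne_zero, not_false_eq_true, zero_pow, zero_mul, zero_add] at hE
    exact mul_ne_zero h2 h2 (by linear_combination hE)
  have hcq : c ^ (n + 1) = 2 := by
    have : c * (c ^ (n + 1) - 2) = 0 := by linear_combination hE' - c ^ 2 * c ^ n * hn
    linear_combination (mul_eq_zero.1 this).resolve_left hc
  have hc2 : c ^ 2 + 4 = 0 := by linear_combination hE - c ^ 2 * hcq
  have hfrob : (c ^ 2 + 4) ^ (n + 2) = 4 * c ^ 2 + 4 := by
    have hcp : c ^ (n + 2) = 2 * c := by rw [pow_succ', hcq, mul_comm]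
    rw [add_pow_char, h4, ← pow_mul, mul_comm, pow_mul, hcp]
    ring
  rw [hc2, zero_pow (by omega)] at hfrob
  exact mul_ne_zero (mul_ne_zero h2 h2) h3 (by linear_combination hfrob + 4 * hc2)

lemma squarefree_X_pow_pred_sub_one_mul [IsAlgClosed K] (hp : 3 < p) :
    Squarefree ((X ^ (p - 1) - 1) * (X ^ 2 * (X ^ (p - 1) - 1) + 4) : K[X]) := by
  have hsep : (X ^ (p - 1) - 1 : K[X]).Separable := by
    simpa using separable_X_pow_sub_C' p (p - 1) (1 : K)
      (Nat.not_dvd_of_pos_of_lt (by omega) (by omega)) one_ne_zero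
  have h2 : (2 : K) ≠ 0 :=
    mod_cast CharP.cast_ne_zero_of_ne_of_prime K (q := 2) Nat.prime_two (by omega)
  exact (hsep.mul (separable_X_sq_mul_X_pow_pred_sub_one_add_four p hp)
    (isCoprime_X_pow_sub_one_X_sq_mul_add_four _ h2)).squarefree

end Polynomial

namespace RatFunc

open Polynomial

variable {K : Type*} [Field K]

lemma num_pow_succ_mul_eq (A : RatFunc K) (Q : K[X]) (n : ℕ)
    (h : A ^ (n + 1) * algebraMap K[X] (RatFunc K) Q - 2 * A - 1 = 0) :
    A.num ^ (n + 1) * Q = A.denom ^ n * (2 * A.num + A.denom) := by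
  apply algebraMap_injective K
  have hA : algebraMap K[X] (RatFunc K) A.num = A * algebraMap K[X] (RatFunc K) A.denom :=
    (div_eq_iff (algebraMap_ne_zero A.denom_ne_zero)).1 (num_div_denom A)
  simp only [map_mul, map_pow, map_add, map_ofNat, hA]
  linear_combination algebraMap K[X] (RatFunc K) A.denom ^ (n + 1) * h

end RatFunc

open RatFunc

theorem stmt_5 (p : ℕ) [Fact p.Prime] (hp : 3 < p) :
    ¬ ∃ A : RatFunc (AlgebraicClosure (ZMod p)),
      A ^ p * ((X ^ (p - 1) - 1) * (X ^ 2 * (X ^ (p - 1) - 1) + 4)) ^ ((p - 1) / 2)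
        - 2 * A - 1 = 0 := by
  rintro ⟨A, hA⟩
  obtain ⟨m, hm⟩ : 2 ∣ p - 1 := (Nat.Prime.even_sub_one Fact.out (by omega)).two_dvd
  set P : Polynomial (AlgebraicClosure (ZMod p)) :=
    (Polynomial.X ^ (p - 1) - 1) * (Polynomial.X ^ 2 * (Polynomial.X ^ (p - 1) - 1) + 4)
  have hP : Squarefree P := Polynomial.squarefree_X_pow_pred_sub_one_mul p hp
  have key := A.num_pow_succ_mul_eq (P ^ m) (2 * m) (by
    rw [show 2 * m + 1 = p by omega]
    rw [hm, Nat.mul_div_cancel_left m two_pos] at hA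
    simpa [P, hm, map_ofNat] using hA)
  have hdenom : A.denom = 1 := A.monic_denom.eq_one_of_isUnit
    (isUnit_of_pow_dvd_mul_pow_of_squarefree (by omega) A.isCoprime_num_denom hP ⟨_, key⟩)
  rw [hdenom, one_pow, one_mul] at key
  refine A.num.pow_succ_mul_ne_two_mul_add_one (2 * m) ?_ key
  have hroot : P.IsRoot 1 := by simp [P]
  rw [Polynomial.natDegree_pow]
  exact mul_ne_zero (by omega) (Polynomial.natDegree_pos_iff_degree_pos.2
    (Polynomial.degree_pos_of_root hP.ne_zero hroot)).ne'
end

section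
/- Let p > 3 be prime and let Δ be an element of an extension of the rational function field K(Y) (K = algebraic closure of F_p) with Δ^2 = (Y^{p-1} - 1)(Y^2(Y^{p-1} - 1) + 4). Then Δ ∉ K(Y); i.e., (Y^{p-1} - 1)(Y^2(Y^{p-1} - 1) + 4) is not a square in K(Y). -/
/-!
A square in `K(Y)` of a polynomial is the square of a polynomial, since `K[Y]` is integrally
closed. A root of the square of a polynomial is a root of its derivative. But `Y = 1` is a simple
root of `(Y^(p-1) - 1)(Y^2 (Y^(p-1) - 1) + 4)`: the derivative there is `(p - 1) * 4 = -4`, nonzero as `p ≠ 2`.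
-/

theorem IsIntegrallyClosed.exists_pow_eq_of_pow_eq_algebraMap {R K : Type*} [CommRing R]
    [CommRing K] [Algebra R K] [IsFractionRing R K] [IsIntegrallyClosed R] {n : ℕ} (hn : n ≠ 0)
    {x : K} {r : R} (h : x ^ n = algebraMap R K r) : ∃ y : R, y ^ n = r := by
  obtain ⟨y, rfl⟩ := exists_algebraMap_eq_of_isIntegral_pow (Nat.pos_of_ne_zero hn)
    (h ▸ isIntegral_algebraMap)
  exact ⟨y, IsFractionRing.injective R K (by rw [map_pow, h])⟩

theorem Polynomial.eval_derivative_eq_zero_of_sq_eq {R : Type*} [CommRing R] [IsReduced R]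
    {q P : Polynomial R} (hq : q ^ 2 = P) {a : R} (ha : P.eval a = 0) :
    P.derivative.eval a = 0 := by
  have hqa : q.eval a = 0 := IsReduced.eq_zero _ ⟨2, by rw [← Polynomial.eval_pow, hq, ha]⟩
  simp [← hq, Polynomial.derivative_pow, hqa]

section

open Polynomial

variable (K : Type*) [CommRing K] (p : ℕ)

noncomputable def deltaSqPoly : K[X] :=
  (X ^ (p - 1) - 1) * (X ^ 2 * (X ^ (p - 1) - 1) + 4)

theorem deltaSqPoly_eval_one : (deltaSqPoly K p).eval 1 = 0 := by
  simp [deltaSqPoly]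

theorem deltaSqPoly_derivative_eval_one [CharP K p] (hp : p ≠ 0) :
    (deltaSqPoly K p).derivative.eval 1 = -4 := by
  have hp1 : ((p - 1 : ℕ) : K) = -1 := by
    rw [Nat.cast_sub (Nat.one_le_iff_ne_zero.mpr hp), CharP.cast_eq_zero, Nat.cast_one, zero_sub]
  simp [deltaSqPoly, derivative_mul, derivative_X_pow, hp1]

end

open RatFunc

theorem algebraMap_deltaSqPoly (K : Type*) [Field K] (p : ℕ) :
    algebraMap (Polynomial K) (RatFunc K) (deltaSqPoly K p) =
      (X ^ (p - 1) - 1) * (X ^ 2 * (X ^ (p - 1) - 1) + 4) := by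
  simp [deltaSqPoly, map_ofNat, RatFunc.algebraMap_X]

theorem stmt_7 (p : ℕ) [Fact p.Prime] (hp : 3 < p) :
    ¬ ∃ A : RatFunc (AlgebraicClosure (ZMod p)),
      A ^ 2 = (X ^ (p - 1) - 1) * (X ^ 2 * (X ^ (p - 1) - 1) + 4) := by
  rintro ⟨A, hA⟩
  set K := AlgebraicClosure (ZMod p)
  obtain ⟨q, hq⟩ := IsIntegrallyClosed.exists_pow_eq_of_pow_eq_algebraMap two_ne_zero
    (hA.trans (algebraMap_deltaSqPoly K p).symm)
  have h := Polynomial.eval_derivative_eq_zero_of_sq_eq hq (deltaSqPoly_eval_one K p)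
  rw [deltaSqPoly_derivative_eval_one K p (Fact.out : p.Prime).ne_zero, neg_eq_zero] at h
  have hp4 : p ∣ 4 := (CharP.cast_eq_zero_iff K p 4).mp (by exact_mod_cast h)
  obtain rfl : p = 4 := by have := Nat.le_of_dvd four_pos hp4; omega
  exact absurd Fact.out (by norm_num : ¬ Nat.Prime 4)
end

section
/- Let p ≥ 3 be prime and b ∈ F_{p^2} with τ := Tr_{F_{p^2}/F_p}(b) satisfying τ^2 = 1. Then f_b(x) = x + (x^p - x + b)^{-1} is a permutation of F_{p^2}. -/
/-!
Let `σ x = x ^ p`, an involution of `𝔽_{p²}`, and `y = x ^ p - x + b`, so that `y + σ y = τ`;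
in particular `y ≠ 0`. If `f x₁ = f x₂` with `y₁ ≠ y₂`, put `u = y₁ - y₂`, `s = y₁ y₂` and
`d = x₁ - x₂`. Then `d s = u`, `σ d - d = u` and `σ u = -u`, which together force
`(1 + s)(1 + σ s) = 1`. Since `τ² = 1`, this says `(1 + s + σ s)² = u²`; but `1 + s + σ s` is
fixed by `σ` while `σ u = -u`, so `u = 0` in odd characteristic.
-/
open Function

section
variable {F : Type*} [Field F] {p : ℕ}

lemma eq_zero_of_sq_eq_sq_of_pow_expChar [ExpChar F p] (h2 : (2 : F) ≠ 0) {u v : F}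
    (hv : v ^ p = v) (hu : u ^ p = -u) (h : v ^ 2 = u ^ 2) : u = 0 := by
  have hsub : (v - u) ^ p = v + u := by rw [sub_pow_expChar, hv, hu, sub_neg_eq_add]
  have hadd : (v + u) ^ p = v - u := by rw [add_pow_expChar, hv, hu, ← sub_eq_add_neg]
  have hp : p ≠ 0 := expChar_ne_zero F p
  have hboth : v - u = 0 ∧ v + u = 0 := by
    rcases mul_eq_zero.mp (by linear_combination h : (v - u) * (v + u) = 0) with h0 | h0
    · exact ⟨h0, by rw [← hsub, h0, zero_pow hp]⟩
    · exact ⟨by rw [← hadd, h0, zero_pow hp], h0⟩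
  have : 2 * u = 0 := by linear_combination hboth.2 - hboth.1
  exact (mul_eq_zero.mp this).resolve_left h2

lemma one_add_mul_one_add_pow_eq_one {d s u : F} (hu : u ^ p = -u) (hds : d * s = u)
    (hdu : d ^ p - d = u) (hu0 : u ≠ 0) : (1 + s) * (1 + s ^ p) = 1 := by
  have hdsp : d ^ p * s ^ p = -u := by rw [← mul_pow, hds, hu]
  have : u * ((1 + s) * (1 + s ^ p) - 1) = 0 := by
    linear_combination -s * s ^ p * hdu + s * hdsp - s ^ p * hds
  exact sub_eq_zero.mp ((mul_eq_zero.mp this).resolve_left hu0)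

lemma sq_one_add_add_pow_eq_sq_sub {t y₁ y₂ : F} (ht : t ^ 2 = 1) (hy₁ : y₁ + y₁ ^ p = t)
    (hy₂ : y₂ + y₂ ^ p = t) (hN : (1 + y₁ * y₂) * (1 + (y₁ * y₂) ^ p) = 1) :
    (1 + y₁ * y₂ + (y₁ * y₂) ^ p) ^ 2 = (y₁ - y₂) ^ 2 := by
  rw [mul_pow, ← sub_eq_of_eq_add' hy₁.symm, ← sub_eq_of_eq_add' hy₂.symm] at hN ⊢
  linear_combination (t ^ 2 - 1 - 2 * t * (y₁ + y₂) + (y₁ + y₂) ^ 2) * ht + 4 * hN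

lemma add_pow_expChar_sub_add [ExpChar F p] (hσ : ∀ x : F, (x ^ p) ^ p = x) (x b : F) :
    (x ^ p - x + b) + (x ^ p - x + b) ^ p = b + b ^ p := by
  rw [add_pow_expChar, sub_pow_expChar, hσ]
  ring

theorem injective_add_inv_pow_expChar_sub_add [ExpChar F p] (h2 : (2 : F) ≠ 0)
    (hσ : ∀ x : F, (x ^ p) ^ p = x) {b : F} (hb : (b + b ^ p) ^ 2 = 1) :
    Injective fun x : F => x + (x ^ p - x + b)⁻¹ := by
  intro x₁ x₂ hx
  change x₁ + (x₁ ^ p - x₁ + b)⁻¹ = x₂ + (x₂ ^ p - x₂ + b)⁻¹ at hx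
  have hy₁ := add_pow_expChar_sub_add hσ x₁ b
  have hy₂ := add_pow_expChar_sub_add hσ x₂ b
  set y₁ := x₁ ^ p - x₁ + b
  set y₂ := x₂ ^ p - x₂ + b
  set t := b + b ^ p
  have hy_ne {y : F} (hy : y + y ^ p = t) : y ≠ 0 := by
    rintro rfl
    simp [← hy, expChar_ne_zero F p] at hb
  have hd : (x₁ - x₂) * (y₁ * y₂) = y₁ - y₂ := by
    field_simp [hy_ne hy₁, hy_ne hy₂] at hx
    linear_combination hx
  have hdu : (x₁ - x₂) ^ p - (x₁ - x₂) = y₁ - y₂ := by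
    rw [sub_pow_expChar]; ring
  have hu : (y₁ - y₂) ^ p = -(y₁ - y₂) := by
    rw [sub_pow_expChar]; linear_combination hy₁ - hy₂
  by_contra hne
  have hy : y₁ - y₂ ≠ 0 := fun h => hne <| sub_eq_zero.mp <|
    (mul_eq_zero.mp (hd.trans h)).resolve_right (mul_ne_zero (hy_ne hy₁) (hy_ne hy₂))
  have hN := one_add_mul_one_add_pow_eq_one hu hd hdu hy
  have hv : (1 + y₁ * y₂ + (y₁ * y₂) ^ p) ^ p = 1 + y₁ * y₂ + (y₁ * y₂) ^ p := by
    rw [add_pow_expChar, add_pow_expChar, one_pow, hσ]; ring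
  exact hy <| eq_zero_of_sq_eq_sq_of_pow_expChar h2 hv hu <|
    sq_one_add_add_pow_eq_sq_sub hb hy₁ hy₂ hN

end

theorem stmt_9 (p : ℕ) [Fact p.Prime] (hp : 3 ≤ p)
    (b : GaloisField p 2)
    (hb : (Algebra.trace (ZMod p) (GaloisField p 2) b) ^ 2 = 1) :
    Function.Bijective (fun x : GaloisField p 2 => x + (x ^ p - x + b)⁻¹) := by
  have := Fintype.ofFinite (GaloisField p 2)
  have hσ (x : GaloisField p 2) : (x ^ p) ^ p = x := by
    rw [← pow_mul, ← sq, ← GaloisField.card p 2 two_ne_zero, ← Fintype.card_eq_nat_card,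
      FiniteField.pow_card]
  have htr : algebraMap (ZMod p) _ (Algebra.trace (ZMod p) (GaloisField p 2) b) = b + b ^ p := by
    simp [FiniteField.algebraMap_trace_eq_sum_pow, GaloisField.finrank p two_ne_zero,
      Finset.sum_range_succ]
  have h2 : (2 : GaloisField p 2) ≠ 0 :=
    Ring.two_ne_zero (by rw [ringChar.eq (GaloisField p 2) p]; omega)
  refine Finite.injective_iff_bijective.mp (injective_add_inv_pow_expChar_sub_add h2 hσ ?_)
  rw [← htr, ← map_pow, hb, map_one]
end

section
/- Let p ≥ 3 be prime and b ∈ F_{p^2} with Tr_{F_{p^2}/F_p}(b) ≠ 0. Then f_b(x) = x + (x^p - x + b)^{-1} permutes F_{p^2} if and only if Tr_{F_{p^2}/F_p}(b) = 1 or Tr_{F_{p^2}/F_p}(b) = -1. -/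
/-!
Put `t = Tr b ∈ 𝔽_pˣ` and `y = x ^ p - x + b`, so that `y ^ p = t - y`. The coordinate
`u = 2 y - t` takes values in the trace-zero line `L = {u | u ^ p = -u}` of `p` elements,
its fibres are the cosets of `𝔽_p`, and `f_b` commutes with translations by `𝔽_p` and acts
on `u` as `g_t(u) = u + 4 / (t - u) - 4 / (t + u)`. Hence `f_b` permutes `𝔽_{p²}` iff `g_t`
is injective on `L`.

If `t² = 1`, then `g_t(u) = g_t(w)` forces `(u - w) ((u w + 3)² - (u - w)²) = 0`; as
`u w + 3` is fixed and `u - w` is negated by Frobenius, `u = w`. Conversely, if `g_t`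
permutes `L` then `∑_L g_t(u)² = ∑_L u²`. Expanding in partial fractions and using
`∑_L 1 / (c - u) = 1 / (c ^ p + c)` and `∑_L 1 / (c - u)² = 1 / (c ^ p + c)²`, which come
from the first two derivatives of `∏_L (X - u) = X ^ p + X`, the difference of the two sums
is `8 - 8 / t²`.
-/

open Polynomial Finset

section Polynomial

variable {F : Type*} [Field F]

theorem eval_derivative_prod_X_sub_C (s : Finset F) {c : F} (hc : c ∉ s) :
    (derivative (∏ u ∈ s, (X - C u))).eval c =
      (∏ u ∈ s, (X - C u)).eval c * ∑ u ∈ s, (c - u)⁻¹ := by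
  classical
  rw [derivative_prod_finset, eval_finsetSum, mul_sum]
  refine sum_congr rfl fun u hu => ?_
  have hcu : c - u ≠ 0 := sub_ne_zero.mpr (ne_of_mem_of_not_mem hu hc).symm
  simp only [derivative_X_sub_C, mul_one, eval_prod, eval_sub, eval_X, eval_C]
  rw [← mul_prod_erase s (fun v => c - v) hu]
  field_simp

theorem eval_derivative_derivative_prod_X_sub_C (s : Finset F) {c : F} (hc : c ∉ s) :
    (derivative (derivative (∏ u ∈ s, (X - C u)))).eval c =
      (∏ u ∈ s, (X - C u)).eval c *
        ((∑ u ∈ s, (c - u)⁻¹) ^ 2 - ∑ u ∈ s, ((c - u)⁻¹) ^ 2) := by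
  classical
  have hterm : ∀ u ∈ s, (derivative (∏ v ∈ s.erase u, (X - C v))).eval c =
      (∏ v ∈ s, (X - C v)).eval c *
        ((c - u)⁻¹ * ∑ v ∈ s, (c - v)⁻¹ - ((c - u)⁻¹) ^ 2) := by
    intro u hu
    have hcu : c - u ≠ 0 := sub_ne_zero.mpr (ne_of_mem_of_not_mem hu hc).symm
    rw [eval_derivative_prod_X_sub_C _ (fun h => hc (mem_of_mem_erase h)),
      ← mul_prod_erase s (fun v => X - C v) hu, ← add_sum_erase s (fun v => (c - v)⁻¹) hu]
    simp only [eval_mul, eval_sub, eval_X, eval_C]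
    field_simp
    ring
  simp only [derivative_prod_finset (s := s), derivative_X_sub_C, mul_one, derivative_sum,
    eval_finsetSum]
  rw [sum_congr rfl hterm, ← mul_sum, sum_sub_distrib, ← sum_mul, sq]

theorem card_filter_pow_eq_mul_add_le [Fintype F] [DecidableEq F] {n : ℕ} (hn : 1 < n) (a b : F) :
    #{x | x ^ n = a * x + b} ≤ n := by
  have hmonic : (X ^ n - C a * X - C b : F[X]).Monic := by
    monicity!
    simp [hn.le, not_le.mpr hn]
  refine (card_le_degree_of_subset_roots (p := X ^ n - C a * X - C b) fun x hx => ?_).trans ?_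
  · simp only [mem_val, mem_filter, mem_univ, true_and] at hx
    simp [mem_roots hmonic.ne_zero, hx]
  · compute_degree!
    omega

end Polynomial

section Frobenius

theorem pow_pow_char_of_card_eq_sq {K : Type*} [Field K] [Fintype K] {p : ℕ}
    (hK : Fintype.card K = p ^ 2) (x : K) : (x ^ p) ^ p = x := by
  rw [← pow_mul, ← sq, ← hK, FiniteField.pow_card]

variable {K : Type*} [Field K] {p : ℕ} [Fact p.Prime] [CharP K p]

theorem neg_pow_char (x : K) : (-x) ^ p = -x ^ p := map_neg (frobenius K p) x

theorem ofNat_pow_char (n : ℕ) [n.AtLeastTwo] :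
    (no_index (OfNat.ofNat n) : K) ^ p = OfNat.ofNat n :=
  map_ofNat (frobenius K p) n

end Frobenius

section TraceZero

variable (K : Type*) [Field K] [Fintype K] (p : ℕ)

/-- The elements of trace zero over `𝔽_p` when `K = 𝔽_{p²}`. -/
noncomputable def traceZero : Finset K := by
  classical exact {u | u ^ p = -u}

variable {K p}

theorem mem_traceZero {u : K} : u ∈ traceZero K p ↔ u ^ p = -u := by
  classical simp [traceZero]

theorem pow_add_self_ne_zero_of_notMem_traceZero {c : K} (hc : c ∉ traceZero K p) :
    c ^ p + c ≠ 0 :=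
  fun h => hc (mem_traceZero.mpr (eq_neg_of_add_eq_zero_left h))

theorem eq_zero_of_mem_traceZero_of_pow_eq_self (h2 : (2 : K) ≠ 0) {u : K}
    (hu : u ∈ traceZero K p) (hu' : u ^ p = u) : u = 0 := by
  rw [mem_traceZero, hu'] at hu
  exact (mul_eq_zero.mp (by linear_combination hu : (2 : K) * u = 0)).resolve_left h2

theorem notMem_traceZero_of_pow_eq_self (h2 : (2 : K) ≠ 0) {t : K} (ht : t ≠ 0)
    (htp : t ^ p = t) : t ∉ traceZero K p :=
  fun h => ht (eq_zero_of_mem_traceZero_of_pow_eq_self h2 h htp)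

variable [Fact p.Prime]

theorem card_traceZero_le : #(traceZero K p) ≤ p := by
  classical
  simpa [traceZero] using card_filter_pow_eq_mul_add_le (Fact.out : p.Prime).one_lt (-1 : K) 0

variable [CharP K p]

theorem neg_mem_traceZero {u : K} (hu : u ∈ traceZero K p) : -u ∈ traceZero K p := by
  rw [mem_traceZero] at hu ⊢
  rw [neg_pow_char, hu]

theorem sub_mem_traceZero {u w : K} (hu : u ∈ traceZero K p) (hw : w ∈ traceZero K p) :
    u - w ∈ traceZero K p := by
  rw [mem_traceZero] at hu hw ⊢
  rw [sub_pow_char, hu, hw, neg_sub, neg_sub_neg]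

theorem sum_comp_neg_traceZero {M : Type*} [AddCommMonoid M] (f : K → M) :
    ∑ u ∈ traceZero K p, f (-u) = ∑ u ∈ traceZero K p, f u :=
  sum_equiv (Equiv.neg K)
    (fun u => ⟨neg_mem_traceZero, fun h => neg_neg u ▸ neg_mem_traceZero h⟩) (fun _ _ => rfl)

theorem pow_sub_mem_traceZero (hK : Fintype.card K = p ^ 2) (x : K) :
    x ^ p - x ∈ traceZero K p := by
  rw [mem_traceZero, sub_pow_char, pow_pow_char_of_card_eq_sq hK, neg_sub]

omit [CharP K p] in
/-- Each fibre of `x ↦ x ^ p - x` is the root set of a polynomial of degree `p`. -/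
theorem le_card_image_pow_sub [DecidableEq K] (hK : Fintype.card K = p ^ 2) :
    p ≤ #(univ.image fun x : K => x ^ p - x) := by
  have hp := (Fact.out : p.Prime).one_lt
  have hfiber : ∀ v ∈ univ.image (fun x : K => x ^ p - x),
      #{x ∈ univ | x ^ p - x = v} ≤ p := by
    intro v _
    simpa only [sub_eq_iff_eq_add', one_mul] using card_filter_pow_eq_mul_add_le hp 1 v
  have hcount : p * p ≤ p * #(univ.image fun x : K => x ^ p - x) := by
    simpa [hK, sq] using card_le_mul_card_image univ p hfiber
  exact Nat.le_of_mul_le_mul_left hcount (by omega)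

theorem image_pow_sub_eq_traceZero [DecidableEq K] (hK : Fintype.card K = p ^ 2) :
    univ.image (fun x : K => x ^ p - x) = traceZero K p := by
  refine eq_of_subset_of_card_le (fun v hv => ?_)
    (card_traceZero_le.trans (le_card_image_pow_sub hK))
  obtain ⟨x, -, rfl⟩ := mem_image.mp hv
  exact pow_sub_mem_traceZero hK x

theorem card_traceZero (hK : Fintype.card K = p ^ 2) : #(traceZero K p) = p := by
  classical
  exact card_traceZero_le.antisymm (image_pow_sub_eq_traceZero hK ▸ le_card_image_pow_sub hK)

theorem exists_pow_sub_eq_of_mem_traceZero (hK : Fintype.card K = p ^ 2) {u : K}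
    (hu : u ∈ traceZero K p) : ∃ x, x ^ p - x = u := by
  classical
  rw [← image_pow_sub_eq_traceZero hK] at hu
  simpa using hu

theorem prod_X_sub_C_traceZero (hK : Fintype.card K = p ^ 2) :
    ∏ u ∈ traceZero K p, (X - C u) = X ^ p + X := by
  have hp := (Fact.out : p.Prime).one_lt
  have hmonic : (X ^ p + X : K[X]).Monic := by
    monicity!
    simp [not_le.mpr hp, (Fact.out : p.Prime).ne_zero]
  refine (eq_of_monic_of_dvd_of_natDegree_le (monic_prod_of_monic _ _ fun u _ => monic_X_sub_C u)
    hmonic ?_ ?_).symm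
  · refine prod_dvd_of_coprime
      (fun u _ w _ huw => pairwise_coprime_X_sub_C Function.injective_id huw) fun u hu => ?_
    simp [dvd_iff_isRoot, mem_traceZero.mp hu]
  · rw [natDegree_prod_of_monic _ _ fun u _ => monic_X_sub_C u]
    simp only [natDegree_X_sub_C, sum_const, card_traceZero hK, smul_eq_mul, mul_one]
    compute_degree!
    exact hp.le

theorem sum_inv_sub_traceZero (hK : Fintype.card K = p ^ 2) {c : K} (hc : c ∉ traceZero K p) :
    ∑ u ∈ traceZero K p, (c - u)⁻¹ = (c ^ p + c)⁻¹ := by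
  have h := eval_derivative_prod_X_sub_C _ hc
  rw [prod_X_sub_C_traceZero hK] at h
  simp only [derivative_add, derivative_X_pow, CharP.cast_eq_zero, map_zero, zero_mul,
    derivative_X, zero_add, eval_one, eval_add, eval_pow, eval_X] at h
  exact eq_inv_of_mul_eq_one_right h.symm

theorem sum_inv_sub_sq_traceZero (hK : Fintype.card K = p ^ 2) {c : K} (hc : c ∉ traceZero K p) :
    ∑ u ∈ traceZero K p, ((c - u)⁻¹) ^ 2 = ((c ^ p + c)⁻¹) ^ 2 := by
  have h := eval_derivative_derivative_prod_X_sub_C _ hc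
  rw [prod_X_sub_C_traceZero hK] at h
  simp only [derivative_add, derivative_X_pow, CharP.cast_eq_zero, map_zero, zero_mul,
    derivative_X, zero_add, derivative_one, eval_zero, eval_add, eval_pow, eval_X] at h
  have hsq := (mul_eq_zero.mp h.symm).resolve_left (pow_add_self_ne_zero_of_notMem_traceZero hc)
  rw [← sum_inv_sub_traceZero hK hc, sub_eq_zero.mp hsq]

end TraceZero

section RationalMaps

variable {K : Type*} [Field K] {p : ℕ}

def fMap (p : ℕ) (b x : K) : K := x + (x ^ p - x + b)⁻¹

/-- The coordinate `2 (x ^ p - x + b) - Tr b` on `K / 𝔽_p`, in which `fMap p b` becomes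
`gMap (Tr b)`. -/
def coord (p : ℕ) (b x : K) : K := 2 * (x ^ p - x) + b - b ^ p

def gMap (t u : K) : K := u + 4 / (t - u) - 4 / (t + u)

theorem gMap_sub_gMap {t u w : K} (hu : t - u ≠ 0) (hu' : t + u ≠ 0) (hw : t - w ≠ 0)
    (hw' : t + w ≠ 0) :
    (gMap t u - gMap t w) * ((t ^ 2 - u ^ 2) * (t ^ 2 - w ^ 2)) =
      (u - w) * ((t ^ 2 - u ^ 2) * (t ^ 2 - w ^ 2) + 8 * (t ^ 2 + u * w)) := by
  unfold gMap
  field_simp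
  ring

variable [Fact p.Prime] [CharP K p] {b t : K}

theorem coord_add_of_pow_eq_self {c : K} (hc : c ^ p = c) (x : K) :
    coord p b (x + c) = coord p b x := by
  simp only [coord, add_pow_char, hc]
  ring

theorem fMap_add_of_pow_eq_self {c : K} (hc : c ^ p = c) (x : K) :
    fMap p b (x + c) = fMap p b x + c := by
  simp only [fMap, add_pow_char, hc, add_sub_add_right_eq_sub]
  ring

theorem sub_pow_eq_sub_of_coord_eq (h2 : (2 : K) ≠ 0) {x x' : K}
    (h : coord p b x = coord p b x') : (x - x') ^ p = x - x' := by
  have h' : 2 * ((x ^ p - x) - (x' ^ p - x')) = 0 := by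
    unfold coord at h
    linear_combination h
  rw [sub_pow_char]
  linear_combination (mul_eq_zero.mp h').resolve_left h2

variable [Fintype K]

theorem gMap_mem_traceZero (htp : t ^ p = t) {u : K} (hu : u ∈ traceZero K p) :
    gMap t u ∈ traceZero K p := by
  rw [mem_traceZero] at hu ⊢
  simp only [gMap, add_pow_char, sub_pow_char, div_pow, ofNat_pow_char, htp, hu]
  ring

theorem coord_mem_traceZero (hK : Fintype.card K = p ^ 2) (x : K) :
    coord p b x ∈ traceZero K p := by
  rw [mem_traceZero, coord]
  simp only [sub_pow_char, add_pow_char, mul_pow, ofNat_pow_char, pow_pow_char_of_card_eq_sq hK]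
  ring

theorem exists_coord_eq (hK : Fintype.card K = p ^ 2) (h2 : (2 : K) ≠ 0) {u : K}
    (hu : u ∈ traceZero K p) : ∃ x, coord p b x = u := by
  have hv : (u - b + b ^ p) / 2 ∈ traceZero K p := by
    rw [mem_traceZero, div_pow, add_pow_char, sub_pow_char, ofNat_pow_char, mem_traceZero.mp hu,
      pow_pow_char_of_card_eq_sq hK]
    ring
  obtain ⟨x, hx⟩ := exists_pow_sub_eq_of_mem_traceZero hK hv
  refine ⟨x, ?_⟩
  rw [coord, hx]
  field_simp
  ring

theorem pow_sub_add_pow (hK : Fintype.card K = p ^ 2) (hbt : b + b ^ p = t) (x : K) :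
    (x ^ p - x + b) ^ p = t - (x ^ p - x + b) := by
  rw [add_pow_char, sub_pow_char, pow_pow_char_of_card_eq_sq hK]
  linear_combination hbt

theorem pow_sub_add_ne_zero (hK : Fintype.card K = p ^ 2) (hbt : b + b ^ p = t) (ht : t ≠ 0)
    (x : K) : x ^ p - x + b ≠ 0 := by
  intro h
  have h' := pow_sub_add_pow hK hbt x
  rw [h, zero_pow (Fact.out : p.Prime).ne_zero] at h'
  exact ht (by linear_combination -h')

theorem coord_fMap (hK : Fintype.card K = p ^ 2) (hbt : b + b ^ p = t) (h2 : (2 : K) ≠ 0)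
    (ht : t ≠ 0) (x : K) : coord p b (fMap p b x) = gMap t (coord p b x) := by
  have hy := pow_sub_add_ne_zero hK hbt ht x
  have hyp := pow_sub_add_pow hK hbt x
  have hty : t - (x ^ p - x + b) ≠ 0 := hyp ▸ pow_ne_zero p hy
  unfold coord fMap gMap
  rw [add_pow_char, inv_pow, hyp, show b ^ p = t - b by linear_combination hbt]
  set y := x ^ p - x + b with hy_def
  rw [show x ^ p = y + x - b by rw [hy_def]; ring]
  rw [show t - (2 * (y + x - b - x) + b - (t - b)) = 2 * (t - y) by ring,
    show t + (2 * (y + x - b - x) + b - (t - b)) = 2 * y by ring]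
  field_simp
  ring

theorem injective_fMap_iff (hK : Fintype.card K = p ^ 2) (hbt : b + b ^ p = t)
    (h2 : (2 : K) ≠ 0) (ht : t ≠ 0) :
    Function.Injective (fMap p b) ↔ Set.InjOn (gMap t) (traceZero K p) := by
  constructor
  · intro hf u hu w hw huw
    obtain ⟨x, rfl⟩ := exists_coord_eq hK h2 (b := b) hu
    obtain ⟨x', rfl⟩ := exists_coord_eq hK h2 (b := b) hw
    rw [← coord_fMap hK hbt h2 ht, ← coord_fMap hK hbt h2 ht] at huw
    have hc := sub_pow_eq_sub_of_coord_eq h2 huw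
    have hx : x = x' + (fMap p b x - fMap p b x') :=
      hf (by rw [fMap_add_of_pow_eq_self hc]; ring)
    rw [hx, coord_add_of_pow_eq_self hc]
  · intro hg x x' hxx'
    have hg' : gMap t (coord p b x) = gMap t (coord p b x') := by
      rw [← coord_fMap hK hbt h2 ht, ← coord_fMap hK hbt h2 ht, hxx']
    have hc := sub_pow_eq_sub_of_coord_eq h2 <|
      hg (coord_mem_traceZero hK x) (coord_mem_traceZero hK x') hg'
    have hx := fMap_add_of_pow_eq_self (b := b) hc x'
    rw [add_sub_cancel, hxx'] at hx
    exact sub_eq_zero.mp (by linear_combination -hx)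

theorem injOn_gMap_of_sq_eq_one (h2 : (2 : K) ≠ 0) (htp : t ^ p = t) (ht1 : t ^ 2 = 1) :
    Set.InjOn (gMap t) (traceZero K p) := by
  intro u hu w hw huw
  have htL := notMem_traceZero_of_pow_eq_self h2 (by rintro rfl; simp at ht1) htp
  have hden : ∀ v ∈ traceZero K p, t - v ≠ 0 ∧ t + v ≠ 0 := fun v hv =>
    ⟨sub_ne_zero.mpr (ne_of_mem_of_not_mem hv htL).symm,
      by simpa using sub_ne_zero.mpr (ne_of_mem_of_not_mem (neg_mem_traceZero hv) htL).symm⟩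
  have h := gMap_sub_gMap (hden u hu).1 (hden u hu).2 (hden w hw).1 (hden w hw).2
  rw [huw, sub_self, zero_mul, ht1] at h
  have hfac : (u - w) * ((u * w + 3 - (u - w)) * (u * w + 3 + (u - w))) = 0 := by
    linear_combination -h
  have hfix : (u * w + 3) ^ p = u * w + 3 := by
    rw [add_pow_char, mul_pow, mem_traceZero.mp hu, mem_traceZero.mp hw, ofNat_pow_char,
      neg_mul_neg]
  suffices (u - w) ^ p = u - w from
    sub_eq_zero.mp (eq_zero_of_mem_traceZero_of_pow_eq_self h2 (sub_mem_traceZero hu hw) this)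
  rcases mul_eq_zero.mp hfac with h0 | h0
  · rw [h0, zero_pow (Fact.out : p.Prime).ne_zero]
  rcases mul_eq_zero.mp h0 with h1 | h1
  · rw [← sub_eq_zero.mp h1, hfix]
  · rw [eq_neg_of_add_eq_zero_right h1, neg_pow_char, hfix]

theorem sum_sq_gMap_sub_sq (hK : Fintype.card K = p ^ 2) (h2 : (2 : K) ≠ 0) (htp : t ^ p = t)
    (ht : t ≠ 0) : ∑ u ∈ traceZero K p, (gMap t u ^ 2 - u ^ 2) = 8 - 8 / t ^ 2 := by
  have htL := notMem_traceZero_of_pow_eq_self h2 ht htp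
  have hpoint : ∀ u ∈ traceZero K p, gMap t u ^ 2 - u ^ 2 =
      -16 + (8 * t - 16 / t) * ((t - u)⁻¹ + (t + u)⁻¹) +
        16 * ((t - u)⁻¹ ^ 2 + (t + u)⁻¹ ^ 2) := by
    intro u hu
    have h1 : t - u ≠ 0 := sub_ne_zero.mpr (ne_of_mem_of_not_mem hu htL).symm
    have h2 : t + u ≠ 0 := by
      simpa using sub_ne_zero.mpr (ne_of_mem_of_not_mem (neg_mem_traceZero hu) htL).symm
    unfold gMap
    field_simp
    ring
  have hneg : ∑ u ∈ traceZero K p, (t + u)⁻¹ = ∑ u ∈ traceZero K p, (t - u)⁻¹ := by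
    simpa only [sub_neg_eq_add] using sum_comp_neg_traceZero (fun u => (t - u)⁻¹)
  have hneg_sq :
      ∑ u ∈ traceZero K p, (t + u)⁻¹ ^ 2 = ∑ u ∈ traceZero K p, (t - u)⁻¹ ^ 2 := by
    simpa only [sub_neg_eq_add] using sum_comp_neg_traceZero (fun u => (t - u)⁻¹ ^ 2)
  rw [sum_congr rfl hpoint, sum_add_distrib, sum_add_distrib, ← mul_sum, ← mul_sum,
    sum_add_distrib, sum_add_distrib, hneg, hneg_sq, sum_inv_sub_traceZero hK htL,
    sum_inv_sub_sq_traceZero hK htL, sum_const, card_traceZero hK, nsmul_eq_mul,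
    CharP.cast_eq_zero, htp, ← two_mul t]
  field_simp
  ring

theorem sq_eq_one_of_injOn_gMap (hK : Fintype.card K = p ^ 2) (h2 : (2 : K) ≠ 0)
    (htp : t ^ p = t) (ht : t ≠ 0) (hg : Set.InjOn (gMap t) (traceZero K p)) : t ^ 2 = 1 := by
  have hmaps : Set.MapsTo (gMap t) (traceZero K p) (traceZero K p) :=
    fun u hu => gMap_mem_traceZero htp hu
  have hperm : ∑ u ∈ traceZero K p, gMap t u ^ 2 = ∑ u ∈ traceZero K p, u ^ 2 :=
    sum_nbij (gMap t) hmaps hg (surjOn_of_injOn_of_card_le _ hmaps hg le_rfl) fun _ _ => rfl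
  have hsum := sum_sq_gMap_sub_sq hK h2 htp ht
  rw [sum_sub_distrib, hperm, sub_self] at hsum
  have h8 : (8 : K) ≠ 0 := by simpa [show (8 : K) = 2 ^ 3 by norm_num] using h2
  field_simp at hsum
  exact mul_left_cancel₀ h8 (by linear_combination -hsum)

theorem injOn_gMap_iff (hK : Fintype.card K = p ^ 2) (h2 : (2 : K) ≠ 0) (htp : t ^ p = t)
    (ht : t ≠ 0) : Set.InjOn (gMap t) (traceZero K p) ↔ t ^ 2 = 1 :=
  ⟨sq_eq_one_of_injOn_gMap hK h2 htp ht, injOn_gMap_of_sq_eq_one h2 htp⟩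

end RationalMaps

theorem GaloisField.algebraMap_trace_eq_add_pow {p : ℕ} [Fact p.Prime] (b : GaloisField p 2) :
    algebraMap (ZMod p) (GaloisField p 2) (Algebra.trace (ZMod p) (GaloisField p 2) b) =
      b + b ^ p := by
  rw [FiniteField.algebraMap_trace_eq_sum_pow, GaloisField.finrank p two_ne_zero, Nat.card_zmod]
  simp [sum_range_succ]

theorem stmt_10 (p : ℕ) [Fact p.Prime] (hp : 3 ≤ p)
    (b : GaloisField p 2)
    (hb : Algebra.trace (ZMod p) (GaloisField p 2) b ≠ 0) :
    Function.Bijective (fun x : GaloisField p 2 => x + (x ^ p - x + b)⁻¹) ↔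
      Algebra.trace (ZMod p) (GaloisField p 2) b = 1 ∨
      Algebra.trace (ZMod p) (GaloisField p 2) b = -1 := by
  let _ : Fintype (GaloisField p 2) := Fintype.ofFinite _
  have hK : Fintype.card (GaloisField p 2) = p ^ 2 := by
    rw [Fintype.card_eq_nat_card, GaloisField.card p 2 two_ne_zero]
  have h2 : (2 : GaloisField p 2) ≠ 0 := Ring.two_ne_zero (by rw [ringChar.eq _ p]; omega)
  set τ := Algebra.trace (ZMod p) (GaloisField p 2) b
  have hbt : b + b ^ p = algebraMap (ZMod p) _ τ :=
    (GaloisField.algebraMap_trace_eq_add_pow b).symm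
  have ht : algebraMap (ZMod p) (GaloisField p 2) τ ≠ 0 := (_root_.map_ne_zero _).mpr hb
  have htp : (algebraMap (ZMod p) (GaloisField p 2) τ) ^ p = algebraMap (ZMod p) _ τ := by
    rw [← map_pow, ZMod.pow_card]
  rw [← Finite.injective_iff_bijective, ← sq_eq_one_iff]
  change Function.Injective (fMap p b) ↔ _
  rw [injective_fMap_iff hK hbt h2 ht, injOn_gMap_iff hK h2 htp ht, ← map_pow,
    ← map_one (algebraMap (ZMod p) (GaloisField p 2)),
    (algebraMap (ZMod p) (GaloisField p 2)).injective.eq_iff]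
end

section
/- Let p ≥ 3 be prime and y ∈ F_{p^2} with y ≠ 0. If y^2 + y^{2p} - y^{1+p} - y^{2+p} + y^{1+2p} = 0, then y ∈ F_p, and consequently y^2 = 0, a contradiction; hence no nonzero y ∈ F_{p^2} satisfies this equation. -/
/-!
Write `b = y ^ p`, so the equation reads `f(y, b) = 0` with
`f(x, z) = x² + z² - x z - x² z + x z²`. Frobenius is an involution of `𝔽_{p²}` that swaps `y`
and `b`, so also `f(b, y) = 0`. Subtracting, `2 y b (b - y) = 0`, hence `b = y` as `p` is odd and
`y ≠ 0`; but `f(y, y) = y²`.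
-/

theorem eq_of_eq_zero_of_swap_eq_zero {K : Type*} [CommRing K] [NoZeroDivisors K]
    (h2 : (2 : K) ≠ 0) {x z : K} (hx : x ≠ 0) (hz : z ≠ 0)
    (h : x ^ 2 + z ^ 2 - x * z - x ^ 2 * z + x * z ^ 2 = 0)
    (h' : z ^ 2 + x ^ 2 - z * x - z ^ 2 * x + z * x ^ 2 = 0) : z = x := by
  have key : 2 * x * z * (z - x) = 0 := by linear_combination h - h'
  simpa [h2, hx, hz, sub_eq_zero] using key

theorem GaloisField.pow_char_pow_char (p : ℕ) [Fact p.Prime] (y : GaloisField p 2) :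
    (y ^ p) ^ p = y := by
  have : Fintype (GaloisField p 2) := Fintype.ofFinite _
  have hcard : Fintype.card (GaloisField p 2) = p ^ 2 := by
    rw [← Nat.card_eq_fintype_card, GaloisField.card p 2 two_ne_zero]
  rw [← pow_mul, ← sq, ← hcard, FiniteField.pow_card]

theorem stmt_11 (p : ℕ) [Fact p.Prime] (hp : 3 ≤ p) :
    ¬ ∃ y : GaloisField p 2, y ≠ 0 ∧
      y ^ 2 + y ^ (2 * p) - y ^ (1 + p) - y ^ (2 + p) + y ^ (1 + 2 * p) = 0 := by
  rintro ⟨y, hy, h⟩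
  set b := y ^ p with hb
  have hbp : b ^ p = y := GaloisField.pow_char_pow_char p y
  have hfb : y ^ 2 + b ^ 2 - y * b - y ^ 2 * b + y * b ^ 2 = 0 := by rw [← h]; ring
  have hbf : b ^ 2 + y ^ 2 - b * y - b ^ 2 * y + b * y ^ 2 = 0 := by
    have := congrArg (frobenius (GaloisField p 2) p) hfb
    simp only [map_add, map_sub, map_mul, map_pow, map_zero, frobenius_def, ← hb,
      hbp] at this
    linear_combination this
  have h2 : (2 : GaloisField p 2) ≠ 0 :=
    Ring.two_ne_zero (by rw [ringChar.eq (GaloisField p 2) p]; omega)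
  have hby : b = y := eq_of_eq_zero_of_swap_eq_zero h2 hy (pow_ne_zero p hy) hfb hbf
  rw [hby] at hfb
  exact hy (pow_eq_zero_iff two_ne_zero |>.mp (by linear_combination hfb))
end

section
/- Let p ≥ 5 be prime and τ ∈ F_p with τ ≠ 0 and τ^2 ≠ 1, and set t = τ^2. The polynomial G(X,Y) = X^4 + Y^4 - 2tX^3Y + (-2 + 4t + t^2)X^2Y^2 - tX^4Y^2 - 2tXY^3 + 2tX^3Y^3 - tX^2Y^4 is irreducible over the algebraic closure of F_p. -/
/-!
Write `G = A + T` with `A = quarticForm t` homogeneous of degree 4 and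
`T = -t (X Y (X - Y))²` homogeneous of degree 6. Substituting `λX, λY` for `X, Y`
turns `G` into `λ⁴ (A + T λ²)`, a polynomial in `λ` over `K[X, Y]`, so a factorization of `G`
gives one of `A + T λ²`. As `A` and `T` are coprime, `A + T λ²` can only split into two factors
linear in `λ`, and comparing coefficients shows that `-A T = (τ X Y (X - Y))² A` is then a square.
Hence `A`, and with it `A(X, 1)`, would be a square, which fails for `t ≠ 0, 1` in odd
characteristic.
-/

namespace Polynomial

section Domain

variable {R : Type*} [CommRing R] [IsDomain R]

theorem irreducible_C_add_C_mul_X_sq {a b : R} (hb : b ≠ 0) (hab : IsRelPrime a b)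
    (hsq : ¬IsSquare (-(a * b))) : Irreducible (C a + C b * X ^ 2) where
  not_isUnit h := by
    obtain ⟨r, -, hr⟩ := isUnit_iff.mp h
    exact hb (by simpa using (congrArg (coeff · 2) hr).symm)
  isUnit_or_isUnit f g h := by
    wlog! H : f.natDegree ≤ g.natDegree generalizing f g
    · exact (this g f (h.trans (mul_comm f g)) H.le).symm
    have hfg : f * g ≠ 0 := by
      rw [← h]
      exact fun h0 => hb (by simpa using congrArg (coeff · 2) h0)
    have hdeg : f.natDegree + g.natDegree = 2 := by
      rw [← natDegree_mul (left_ne_zero_of_mul hfg) (right_ne_zero_of_mul hfg), ← h]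
      compute_degree!
    have hcoeff : ∀ n, (f * g).coeff n = (C a + C b * X ^ 2).coeff n := fun n => by rw [h]
    obtain hf | hf : f.natDegree = 0 ∨ f.natDegree = 1 := by omega
    · left
      rw [eq_C_of_natDegree_eq_zero hf] at hcoeff ⊢
      simp only [coeff_C_mul] at hcoeff
      exact (hab ⟨g.coeff 0, by simpa using (hcoeff 0).symm⟩
        ⟨g.coeff 2, by simpa using (hcoeff 2).symm⟩).map C
    · have hg : g.natDegree ≤ 1 := by omega
      rw [eq_X_add_C_of_natDegree_le_one hf.le, eq_X_add_C_of_natDegree_le_one hg] at hcoeff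
      have h0 : f.coeff 0 * g.coeff 0 = a := by simpa [coeff_X, coeff_C] using hcoeff 0
      have h1 : f.coeff 0 * g.coeff 1 + f.coeff 1 * g.coeff 0 = 0 := by
        simpa [coeff_X, coeff_C, mul_add, add_mul, ← mul_assoc] using hcoeff 1
      have h2 : f.coeff 1 * g.coeff 1 = b := by
        simpa [coeff_X, coeff_C, mul_add, add_mul, ← mul_assoc] using hcoeff 2
      refine absurd ⟨f.coeff 1 * g.coeff 0, ?_⟩ hsq
      rw [← h0, ← h2]
      linear_combination (-(f.coeff 1 * g.coeff 0)) * h1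

theorem exists_associated_X_pow_of_mul_eq_X_pow_mul {Q : R[X]} (hQ : Irreducible Q) {m : ℕ}
    {f g : R[X]} (h : f * g = X ^ m * Q) :
    (∃ k, Associated f (X ^ k)) ∨ ∃ k, Associated g (X ^ k) := by
  induction m generalizing f g with
  | zero =>
    rw [pow_zero, one_mul] at h
    exact (hQ.isUnit_or_isUnit h.symm).imp (fun hf => ⟨0, by simpa [associated_one_iff_isUnit]⟩)
      (fun hg => ⟨0, by simpa [associated_one_iff_isUnit]⟩)
  | succ m ih =>
    have hX : X ∣ f * g := ⟨X ^ m * Q, by rw [h]; ring⟩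
    rcases prime_X.dvd_or_dvd hX with ⟨f', rfl⟩ | ⟨g', rfl⟩
    · refine (ih (f := f') (g := g) (mul_left_cancel₀ X_ne_zero ?_)).imp_left
        fun ⟨k, hk⟩ => ⟨k + 1, by simpa [pow_succ'] using hk.mul_left X⟩
      rw [← mul_assoc, h]; ring
    · refine (ih (f := f) (g := g') (mul_left_cancel₀ X_ne_zero ?_)).imp_right
        fun ⟨k, hk⟩ => ⟨k + 1, by simpa [pow_succ'] using hk.mul_left X⟩
      rw [mul_left_comm, h]; ring

end Domain

theorem not_isSquare_quartic {K : Type*} [Field K] {t : K} (h2 : (2 : K) ≠ 0) (ht0 : t ≠ 0)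
    (ht1 : t ≠ 1) :
    ¬IsSquare (X ^ 4 - C (2 * t) * X ^ 3 + C (-2 + 4 * t + t ^ 2) * X ^ 2 - C (2 * t) * X + 1) := by
  rintro ⟨c, hc⟩
  have hc0 : c ≠ 0 := by rintro rfl; simpa using congrArg (coeff · 0) hc
  have hdeg : c.natDegree = 2 := by
    have h4 : (X ^ 4 - C (2 * t) * X ^ 3 + C (-2 + 4 * t + t ^ 2) * X ^ 2 - C (2 * t) * X
      + 1 : K[X]).natDegree = 4 := by compute_degree!
    rw [hc, natDegree_mul hc0 hc0] at h4
    omega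
  set a := c.coeff 2
  set b := c.coeff 1
  set d := c.coeff 0
  have hsq : c * c = C (a * a) * X ^ 4 + C (2 * (a * b)) * X ^ 3 + C (b * b + 2 * (a * d)) * X ^ 2
      + C (2 * (b * d)) * X + C (d * d) := by
    rw [as_sum_range_C_mul_X_pow c, hdeg]
    simp only [Finset.sum_range_succ, Finset.sum_range_zero, map_mul, map_add, map_ofNat]
    ring
  rw [hsq] at hc
  have e (k : ℕ) := congrArg (coeff · k) hc
  simp only [coeff_add, coeff_sub, coeff_C_mul, coeff_X_pow, coeff_X, coeff_C, coeff_one] at e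
  have e1 : -(2 * t) = 2 * (b * d) := by simpa using e 1
  have e2 : -2 + 4 * t + t ^ 2 = b * b + 2 * (a * d) := by simpa using e 2
  have e3 : -(2 * t) = 2 * (a * b) := by simpa using e 3
  have e4 : 1 = a * a := by simpa using e 4
  have hab : a * b = -t := mul_left_cancel₀ h2 (by linear_combination -e3)
  have hbd : b * d = -t := mul_left_cancel₀ h2 (by linear_combination -e1)
  have hb : b ≠ 0 := by
    rintro hb
    rw [hb, mul_zero, zero_eq_neg] at hab
    exact ht0 hab
  have hda : d = a := mul_left_cancel₀ hb (by linear_combination hbd - hab)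
  rw [hda] at e2
  have h4 : (2 * 2 : K) * (t - 1) = 0 := by
    linear_combination e2 + (b ^ 2 - 2) * e4 + (a * b - t) * hab
  exact ht1 (sub_eq_zero.mp ((mul_eq_zero.mp h4).resolve_left (mul_ne_zero h2 h2)))

end Polynomial

theorem isSquare_of_isSquare_sq_mul {R : Type*} [CommRing R] [IsDomain R] [IsIntegrallyClosed R]
    {a b : R} (hb : b ≠ 0) (h : IsSquare (b ^ 2 * a)) : IsSquare a := by
  obtain ⟨c, hc⟩ := h
  obtain ⟨d, rfl⟩ : b ∣ c :=
    (IsIntegrallyClosed.pow_dvd_pow_iff two_ne_zero).mp ⟨a, by rw [sq c, ← hc]⟩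
  exact ⟨d, mul_left_cancel₀ (pow_ne_zero 2 hb) (by rw [hc]; ring)⟩

namespace MvPolynomial

variable {σ R : Type*} [CommRing R]

/-- `f ↦ f(λ • x)`, with `λ` the polynomial variable; it records the grading by total degree. -/
noncomputable def dilation : MvPolynomial σ R →ₐ[R] Polynomial (MvPolynomial σ R) :=
  aeval fun i => Polynomial.C (X i) * Polynomial.X

theorem dilation_monomial (d : σ →₀ ℕ) (r : R) :
    dilation (monomial d r) = Polynomial.C (monomial d r) * Polynomial.X ^ d.degree := by
  rw [dilation, aeval_monomial, monomial_eq, Finsupp.prod, Finsupp.prod, Finsupp.degree_apply,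
    Polynomial.algebraMap_apply, algebraMap_eq]
  simp only [mul_pow, Finset.prod_mul_distrib, Finset.prod_pow_eq_pow_sum, map_mul, map_prod,
    map_pow, mul_assoc]

theorem IsHomogeneous.dilation_eq {f : MvPolynomial σ R} {n : ℕ} (hf : f.IsHomogeneous n) :
    dilation f = Polynomial.C f * Polynomial.X ^ n := by
  conv_lhs => rw [f.as_sum]
  conv_rhs => rw [f.as_sum]
  rw [map_sum, map_sum, Finset.sum_mul]
  refine Finset.sum_congr rfl fun d hd => ?_
  rw [dilation_monomial, Finsupp.degree_apply, ← hf.degree_eq_sum_deg_support hd]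

theorem eval_one_dilation (f : MvPolynomial σ R) : (dilation f).eval 1 = f := by
  induction f using MvPolynomial.induction_on with
  | C r => simp [dilation, Polynomial.algebraMap_apply]
  | add f g hf hg => rw [map_add, Polynomial.eval_add, hf, hg]
  | mul_X f i hf => rw [map_mul, Polynomial.eval_mul, hf]; simp [dilation]

variable [IsDomain R]

theorem irreducible_of_dilation_eq_X_pow_mul {f : MvPolynomial σ R}
    {Q : Polynomial (MvPolynomial σ R)} (hQ : Irreducible Q) {m : ℕ}
    (h : dilation f = Polynomial.X ^ m * Q) : Irreducible f where
  not_isUnit hf := hQ.not_isUnit (isUnit_of_mul_isUnit_right (h ▸ hf.map dilation))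
  isUnit_or_isUnit a b hab := by
    have hdil : dilation a * dilation b = Polynomial.X ^ m * Q := by rw [← map_mul, ← hab, h]
    have unit_of_associated {g : MvPolynomial σ R} {k : ℕ}
        (hg : Associated (dilation g) (Polynomial.X ^ k)) : IsUnit g := by
      rw [← eval_one_dilation g, ← associated_one_iff_isUnit]
      simpa using hg.map (Polynomial.evalRingHom 1)
    exact (Polynomial.exists_associated_X_pow_of_mul_eq_X_pow_mul hQ hdil).imp
      (fun ⟨_, hk⟩ => unit_of_associated hk) (fun ⟨_, hk⟩ => unit_of_associated hk)

theorem irreducible_add_of_isHomogeneous {A T : MvPolynomial σ R} {m : ℕ}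
    (hA : A.IsHomogeneous m) (hT : T.IsHomogeneous (m + 2)) (hT0 : T ≠ 0) (hAT : IsRelPrime A T)
    (hsq : ¬IsSquare (-(A * T))) : Irreducible (A + T) :=
  irreducible_of_dilation_eq_X_pow_mul (Polynomial.irreducible_C_add_C_mul_X_sq hT0 hAT hsq)
    (by rw [map_add, hA.dilation_eq, hT.dilation_eq]; ring)

end MvPolynomial

open MvPolynomial

section QuarticForm

variable {K : Type*} [Field K] {t : K}

noncomputable def quarticForm (t : K) : MvPolynomial (Fin 2) K :=
  X 0 ^ 4 - C (2 * t) * X 0 ^ 3 * X 1 + C (-2 + 4 * t + t ^ 2) * X 0 ^ 2 * X 1 ^ 2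
    - C (2 * t) * X 0 * X 1 ^ 3 + X 1 ^ 4

theorem isHomogeneous_quarticForm (t : K) : (quarticForm t).IsHomogeneous 4 :=
  ((((isHomogeneous_X_pow 0 4).sub
    ((isHomogeneous_C_mul_X_pow _ 0 3).mul (isHomogeneous_X _ 1))).add
    ((isHomogeneous_C_mul_X_pow _ 0 2).mul (isHomogeneous_X_pow 1 2))).sub
    ((isHomogeneous_C_mul_X _ 0).mul (isHomogeneous_X_pow 1 3))).add (isHomogeneous_X_pow 1 4)

theorem aeval_quarticForm (t : K) :
    aeval ![Polynomial.X, 1] (quarticForm t) =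
      Polynomial.X ^ 4 - Polynomial.C (2 * t) * Polynomial.X ^ 3
        + Polynomial.C (-2 + 4 * t + t ^ 2) * Polynomial.X ^ 2 - Polynomial.C (2 * t) * Polynomial.X
        + 1 := by
  simp [quarticForm, Polynomial.algebraMap_eq]

theorem isRelPrime_quarticForm (ht0 : t ≠ 0) :
    IsRelPrime (quarticForm t) (X 0 * X 1 * (X 0 - X 1)) := by
  have isRelPrime_of_eval {q : MvPolynomial (Fin 2) K} (hq : Irreducible q) (v : Fin 2 → K)
      (hqv : eval v q = 0) (hv : eval v (quarticForm t) ≠ 0) : IsRelPrime (quarticForm t) q :=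
    (hq.isRelPrime_iff_not_dvd.mpr fun h => hv (zero_dvd_iff.mp (hqv ▸ map_dvd (eval v) h))).symm
  have irreducible_sub : Irreducible (X 0 - X 1 : MvPolynomial (Fin 2) K) := by
    simpa [sub_eq_add_neg] using
      irreducible_mul_X_add 1 (-X 1) 0 one_ne_zero (by simp) (by simp) isRelPrime_one_left
  have eval_diagonal : eval ![1, 1] (quarticForm t) = t ^ 2 := by
    simp [quarticForm]
    ring
  refine (IsRelPrime.mul_right ?_ ?_).mul_right ?_
  · exact isRelPrime_of_eval X_prime.irreducible ![0, 1] (by simp) (by simp [quarticForm])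
  · exact isRelPrime_of_eval X_prime.irreducible ![1, 0] (by simp) (by simp [quarticForm])
  · exact isRelPrime_of_eval irreducible_sub ![1, 1] (by simp) (eval_diagonal ▸ pow_ne_zero 2 ht0)

theorem irreducible_quarticForm_add (h2 : (2 : K) ≠ 0) (ht0 : t ≠ 0) (ht1 : t ≠ 1)
    (ht : IsSquare t) : Irreducible (quarticForm t + -(C t * (X 0 * X 1 * (X 0 - X 1)) ^ 2)) := by
  have hS : (X 0 * X 1 * (X 0 - X 1) : MvPolynomial (Fin 2) K) ≠ 0 :=
    mul_ne_zero (mul_ne_zero (X_ne_zero 0) (X_ne_zero 1))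
      (sub_ne_zero.mpr (X_injective.ne (by decide)))
  refine irreducible_add_of_isHomogeneous (isHomogeneous_quarticForm t)
    (((((isHomogeneous_X _ 0).mul (isHomogeneous_X _ 1)).mul
      ((isHomogeneous_X _ 0).sub (isHomogeneous_X _ 1))).pow 2).C_mul t).neg
    (neg_ne_zero.mpr (mul_ne_zero (C_ne_zero.mpr ht0) (pow_ne_zero 2 hS))) ?_ ?_
  · rw [neg_mul_eq_neg_mul, ← map_neg,
      isRelPrime_mul_unit_left_right ((neg_ne_zero.mpr ht0).isUnit.map C)]
    exact (isRelPrime_quarticForm ht0).pow_right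
  · obtain ⟨s, rfl⟩ := ht
    intro hsq
    have hsq' : IsSquare ((C s * (X 0 * X 1 * (X 0 - X 1))) ^ 2 * quarticForm (s * s)) := by
      convert hsq using 1
      simp only [map_mul]
      ring
    have hs : (C s * (X 0 * X 1 * (X 0 - X 1)) : MvPolynomial (Fin 2) K) ≠ 0 :=
      mul_ne_zero (C_ne_zero.mpr (left_ne_zero_of_mul ht0)) hS
    have hA := (isSquare_of_isSquare_sq_mul hs hsq').map
      (aeval (![Polynomial.X, 1] : Fin 2 → Polynomial K))
    rw [aeval_quarticForm] at hA
    exact Polynomial.not_isSquare_quartic h2 ht0 ht1 hA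

end QuarticForm

theorem stmt_14 (p : ℕ) [Fact p.Prime] (hp : 5 ≤ p)
    (τ : ZMod p) (hτ : τ ≠ 0) (hτ2 : τ ^ 2 ≠ 1) :
    Irreducible
      (X 0 ^ 4 + X 1 ^ 4 - C ((2 : AlgebraicClosure (ZMod p)) * algebraMap (ZMod p) _ (τ ^ 2)) * X 0 ^ 3 * X 1
        + C (-2 + 4 * algebraMap (ZMod p) (AlgebraicClosure (ZMod p)) (τ ^ 2)
            + algebraMap (ZMod p) (AlgebraicClosure (ZMod p)) (τ ^ 2) ^ 2) * X 0 ^ 2 * X 1 ^ 2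
        - C (algebraMap (ZMod p) (AlgebraicClosure (ZMod p)) (τ ^ 2)) * X 0 ^ 4 * X 1 ^ 2
        - C (2 * algebraMap (ZMod p) (AlgebraicClosure (ZMod p)) (τ ^ 2)) * X 0 * X 1 ^ 3
        + C (2 * algebraMap (ZMod p) (AlgebraicClosure (ZMod p)) (τ ^ 2)) * X 0 ^ 3 * X 1 ^ 3
        - C (algebraMap (ZMod p) (AlgebraicClosure (ZMod p)) (τ ^ 2)) * X 0 ^ 2 * X 1 ^ 4 :
        MvPolynomial (Fin 2) (AlgebraicClosure (ZMod p))) := by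
  have h2 : (2 : AlgebraicClosure (ZMod p)) ≠ 0 := by
    apply Ring.two_ne_zero
    rw [ringChar.eq (AlgebraicClosure (ZMod p)) p]
    omega
  have ht1 : algebraMap (ZMod p) (AlgebraicClosure (ZMod p)) (τ ^ 2) ≠ 1 := by
    simpa using (algebraMap (ZMod p) (AlgebraicClosure (ZMod p))).injective.ne hτ2
  convert irreducible_quarticForm_add h2 ((map_ne_zero _).mpr (pow_ne_zero 2 hτ)) ht1
    ⟨algebraMap _ _ τ, by rw [map_pow, sq]⟩ using 1
  simp only [quarticForm, map_mul, map_ofNat]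
  ring_nf
end
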